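/- arXiv:0808.3646 — 3 statements merged into one kernel-verified Lean document; each statement's English description precedes it below -/
import Mathlib

section
/- Finite type invariants of degree n separate cyclic equivalence classes of signed words with at most n letters: if w₁ and w₂ are signed words with at most n letters each and v(w₁) = v(w₂) for every finite type invariant v of degree ≤ n, then w₁ and w₂ are cyclically equivalent. -/
/-- Letters are indexed by natural numbers; a signed letter carries a sign
(`true` = `+`, `false` = `−`). -/
abbrev Letter : Type := ℕ × Bool

/-- A signed word: every entry occurs exactly twice, and the two occurrences of
any letter carry the same sign. -/
def IsSignedWord (w : List Letter) : Prop :=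
  ∀ p ∈ w, w.count p = 2 ∧ ∀ q ∈ w, q.1 = p.1 → q.2 = p.2

/-- Signed words (concrete representatives; isomorphism is subsumed by cyclic
equivalence below). -/
def SignedWord : Type := {w : List Letter // IsSignedWord w}

/-- The set of letters occurring in a list of signed letters. -/
def lettersL (w : List Letter) : Finset ℕ := (w.map Prod.fst).toFinset

/-- The set of letters of a signed word. -/
def SignedWord.letters (w : SignedWord) : Finset ℕ := lettersL w.1

/-- The number of (distinct) letters of a signed word. -/
def SignedWord.numLetters (w : SignedWord) : ℕ := w.letters.card

theorem isSignedWord_filter (q : ℕ → Bool) {w : List Letter} (hw : IsSignedWord w) :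
    IsSignedWord (w.filter fun p => q p.1) := by
  intro p hp
  rw [List.mem_filter] at hp
  refine ⟨?_, fun r hr => (hw p hp.1).2 r (List.mem_filter.mp hr).1⟩
  rw [List.count_filter (p := fun r : Letter => q r.1) hp.2]
  exact (hw p hp.1).1

/-- Delete both occurrences of every letter of `T` from `w`. -/
def SignedWord.delete (w : SignedWord) (T : Finset ℕ) : SignedWord :=
  ⟨w.1.filter fun p => decide (p.1 ∉ T), isSignedWord_filter (fun a => decide (a ∉ T)) w.2⟩

/-- The induced signed subword of `w` on a set `U` of letters. -/
def SignedWord.restrict (w : SignedWord) (U : Finset ℕ) : SignedWord :=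
  ⟨w.1.filter fun p => decide (p.1 ∈ U), isSignedWord_filter (fun a => decide (a ∈ U)) w.2⟩

/-- Sign-preserving relabeling of letters. -/
def Iso (w w' : List Letter) : Prop :=
  ∃ f : ℕ ≃ ℕ, w' = w.map fun p => (f p.1, p.2)

/-- The basic move `A^ε x A^ε y ↦ x A^(−ε) y A^(−ε)`. -/
def Move (w w' : List Letter) : Prop :=
  ∃ (a : ℕ) (s : Bool) (x y : List Letter),
    w = (a, s) :: (x ++ (a, s) :: y) ∧ w' = x ++ (a, !s) :: (y ++ [(a, !s)])

/-- Cyclic equivalence of signed words: the equivalence relation generated by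
isomorphism together with the basic move. -/
def CyclicEquivL : List Letter → List Letter → Prop :=
  Relation.EqvGen fun w w' => Iso w w' ∨ Move w w'

/-- Cyclic equivalence of signed words. -/
def SignedWord.CyclicEquiv (w w' : SignedWord) : Prop := CyclicEquivL w.1 w'.1

/-- A cyclic equivalence invariant with values in `F`. -/
def WordInvariant (F : Type*) [Field F] (v : SignedWord → F) : Prop :=
  ∀ w w' : SignedWord, w.CyclicEquiv w' → v w = v w'

/-- The prolongation of `v` to the singular signed word `(w, S)` (the letters of
`S` being declared singular), given by inclusion–exclusion. -/
def prolong (F : Type*) [Field F] (v : SignedWord → F) (w : SignedWord) (S : Finset ℕ) : F :=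
  ∑ T ∈ S.powerset, (-1 : F) ^ T.card * v (w.delete T)

/-- `v` is a finite type invariant of degree ≤ `n`: it is a cyclic equivalence
invariant whose prolongation vanishes on every singular signed word with more
than `n` singular letters. -/
def FiniteTypeLe (F : Type*) [Field F] (n : ℕ) (v : SignedWord → F) : Prop :=
  WordInvariant F v ∧
    ∀ (w : SignedWord) (S : Finset ℕ), S ⊆ w.letters → n < S.card →
      prolong F v w S = 0

/-- The empty signed word `φ`. -/
def wordEmpty : SignedWord := ⟨[], by intro p hp; simp at hp⟩

/-- The one-letter positive signed word `AA`. -/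
def wordAA : SignedWord := ⟨[(0, true), (0, true)], by unfold IsSignedWord; decide⟩

/-- The one-letter negative signed word `ĀĀ`. -/
def wordAAneg : SignedWord := ⟨[(0, false), (0, false)], by unfold IsSignedWord; decide⟩

/-- The two-letter signed word `AABB`. -/
def wordAABB : SignedWord := ⟨[(0, true), (0, true), (1, true), (1, true)], by unfold IsSignedWord; decide⟩

/-- The two-letter signed word `AAB̄B̄`. -/
def wordAABnBn : SignedWord := ⟨[(0, true), (0, true), (1, false), (1, false)], by unfold IsSignedWord; decide⟩

/-- The two-letter signed word `AB̄B̄A`. -/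
def wordABnBnA : SignedWord := ⟨[(0, true), (1, false), (1, false), (0, true)], by unfold IsSignedWord; decide⟩

/-- The two-letter signed word `ABAB`. -/
def wordABAB : SignedWord := ⟨[(0, true), (1, true), (0, true), (1, true)], by unfold IsSignedWord; decide⟩

/-- The underlying list of the word `A₁A₁A₂A₂…AₙAₙ` (all letters positive). -/
def wListN (n : ℕ) : List Letter := (List.range n).flatMap fun i => [(i, true), (i, true)]

/-- `Ncount u w`: the number of `k`-element subsets of the letters of `w`
(`k` = number of letters of `u`) whose induced signed subword is cyclically
equivalent to (an isomorphic copy of) `u`. -/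
noncomputable def Ncount (u w : SignedWord) : ℕ := by
  classical
  exact (w.letters.powerset.filter fun U =>
    U.card = u.numLetters ∧ (w.restrict U).CyclicEquiv u).card

theorem prolong_add (F : Type*) [Field F] (v₁ v₂ : SignedWord → F) (w : SignedWord) (S : Finset ℕ) :
    prolong F (v₁ + v₂) w S = prolong F v₁ w S + prolong F v₂ w S := by
  simp [prolong, ← Finset.sum_add_distrib, mul_add]

theorem prolong_smul (F : Type*) [Field F] (c : F) (v : SignedWord → F) (w : SignedWord) (S : Finset ℕ) :
    prolong F (c • v) w S = c * prolong F v w S := by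
  rw [prolong, prolong, Finset.mul_sum]
  exact Finset.sum_congr rfl fun T _ => by simp [mul_left_comm]

/-- The `F`-vector space `Vₙ` of finite type invariants of degree ≤ `n`. -/
def Vn (F : Type*) [Field F] (n : ℕ) : Submodule F (SignedWord → F) where
  carrier := {v | FiniteTypeLe F n v}
  add_mem' := by
    rintro v₁ v₂ ⟨h1, h1'⟩ ⟨h2, h2'⟩
    refine ⟨fun w w' h => by simp [h1 w w' h, h2 w w' h], fun w S hS hc => ?_⟩
    rw [prolong_add, h1' w S hS hc, h2' w S hS hc, add_zero]
  zero_mem' := ⟨fun _ _ _ => rfl, fun w S hS hc => by simp [prolong]⟩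
  smul_mem' := by
    rintro c v ⟨h, h'⟩
    refine ⟨fun w w' hww => by simp [h w w' hww], fun w S hS hc => ?_⟩
    rw [prolong_smul, h' w S hS hc, mul_zero]

/-- Cyclic equivalence as a setoid on signed words. -/
def cycSetoid : Setoid SignedWord :=
  ⟨SignedWord.CyclicEquiv, fun w => Relation.EqvGen.refl w.1,
    fun h => Relation.EqvGen.symm _ _ h, fun h h' => Relation.EqvGen.trans _ _ _ h h'⟩

/-!
Write `N_u(w)` for the number of letter sets `U` with `w|U` cyclically equivalent to `u`; it is the
sum over all subwords `w|U` of the indicator of the class of `u`. For any invariant `φ`, the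
prolongation of `w ↦ ∑_U φ (w|U)` at `(w, S)` is, by inclusion–exclusion, `∑_{U ⊇ S} φ (w|U)`. The
indicator vanishes on words with more letters than `u`, so `N_u` has degree `≤ |u|`. If `w₂` has at
most as many letters as `w₁`, then `N_{w₁}(w₁) = 1`, while `N_{w₁}(w₂)` is `1` or `0` according as
`w₂` is or is not equivalent to `w₁`.
-/

open Finset

lemma mem_lettersL {a : ℕ} {l : List Letter} : a ∈ lettersL l ↔ ∃ p ∈ l, p.1 = a := by
  simp [lettersL]

lemma lettersL_filter_mem (U : Finset ℕ) (l : List Letter) :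
    lettersL (l.filter fun p => decide (p.1 ∈ U)) = lettersL l ∩ U := by
  ext a
  simp only [mem_lettersL, List.mem_filter, mem_inter, decide_eq_true_eq]
  constructor
  · rintro ⟨p, ⟨hp, hU⟩, rfl⟩; exact ⟨⟨p, hp, rfl⟩, hU⟩
  · rintro ⟨⟨p, hp, rfl⟩, hU⟩; exact ⟨p, ⟨hp, hU⟩, rfl⟩

lemma lettersL_relabel (f : ℕ ≃ ℕ) (l : List Letter) :
    lettersL (l.map fun p => (f p.1, p.2)) = (lettersL l).image f := by
  ext b
  simp only [mem_lettersL, List.mem_map, mem_image]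
  constructor
  · rintro ⟨p, ⟨q, hq, rfl⟩, rfl⟩; exact ⟨q.1, ⟨q, hq, rfl⟩, rfl⟩
  · rintro ⟨c, ⟨q, hq, rfl⟩, rfl⟩; exact ⟨(f q.1, q.2), ⟨q, hq, rfl⟩, rfl⟩

lemma filter_relabel (f : ℕ ≃ ℕ) (U : Finset ℕ) (l : List Letter) :
    (l.map fun p => (f p.1, p.2)).filter (fun p => decide (p.1 ∈ U.image f)) =
      (l.filter fun p => decide (p.1 ∈ U)).map fun p => (f p.1, p.2) := by
  rw [List.filter_map]
  congr 1
  exact List.filter_congr fun p _ => by simp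

namespace CyclicEquivL

lemma refl (w : List Letter) : CyclicEquivL w w := Relation.EqvGen.refl w

lemma symm {w w' : List Letter} (h : CyclicEquivL w w') : CyclicEquivL w' w :=
  Relation.EqvGen.symm _ _ h

lemma trans {w w' w'' : List Letter} (h : CyclicEquivL w w') (h' : CyclicEquivL w' w'') :
    CyclicEquivL w w'' :=
  Relation.EqvGen.trans _ _ _ h h'

end CyclicEquivL

namespace Move

variable {w w' : List Letter}

lemma lettersL_eq (h : Move w w') : lettersL w' = lettersL w := by
  obtain ⟨a, s, x, y, rfl, rfl⟩ := h
  ext b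
  simp only [lettersL, List.mem_toFinset, List.map_append, List.map_cons, List.mem_append,
    List.mem_cons, List.map_nil, List.not_mem_nil]
  tauto

lemma cyclicEquivL_filter (h : Move w w') (U : Finset ℕ) :
    CyclicEquivL (w.filter fun p => decide (p.1 ∈ U)) (w'.filter fun p => decide (p.1 ∈ U)) := by
  obtain ⟨a, s, x, y, rfl, rfl⟩ := h
  by_cases ha : a ∈ U
  · apply Relation.EqvGen.rel
    right
    exact ⟨a, s, x.filter fun p => decide (p.1 ∈ U), y.filter fun p => decide (p.1 ∈ U),
      by simp [List.filter_append, ha], by simp [List.filter_append, ha]⟩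
  · simpa [List.filter_append, ha] using CyclicEquivL.refl _

end Move

/-- The relabelling `σ` records how the isomorphisms along the chain move the letters. -/
theorem CyclicEquivL.exists_relabel_restrict {w w' : List Letter} (h : CyclicEquivL w w') :
    ∃ σ : ℕ ≃ ℕ, lettersL w' = (lettersL w).image σ ∧
      ∀ U : Finset ℕ, CyclicEquivL (w.filter fun p => decide (p.1 ∈ U))
        (w'.filter fun p => decide (p.1 ∈ U.image σ)) := by
  induction h with
  | rel x y hxy =>
    rcases hxy with ⟨f, rfl⟩ | hmove
    · refine ⟨f, lettersL_relabel f x, fun U => ?_⟩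
      rw [filter_relabel]
      exact Relation.EqvGen.rel _ _ (Or.inl ⟨f, rfl⟩)
    · refine ⟨Equiv.refl ℕ, by simp [hmove.lettersL_eq], fun U => ?_⟩
      simpa using hmove.cyclicEquivL_filter U
  | refl x => exact ⟨Equiv.refl ℕ, by simp, fun U => by simpa using CyclicEquivL.refl _⟩
  | symm x y _ ih =>
    obtain ⟨σ, hL, hU⟩ := ih
    refine ⟨σ.symm, by simp [hL, image_image], fun U => ?_⟩
    have := hU (U.image σ.symm)
    rw [image_image, Equiv.self_comp_symm, image_id] at this
    exact this.symm
  | trans x y z _ _ ih₁ ih₂ =>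
    obtain ⟨σ₁, hL₁, hU₁⟩ := ih₁
    obtain ⟨σ₂, hL₂, hU₂⟩ := ih₂
    refine ⟨σ₁.trans σ₂, by rw [hL₂, hL₁, image_image, Equiv.coe_trans], fun U => ?_⟩
    have := hU₂ (U.image σ₁)
    rw [image_image, ← Equiv.coe_trans] at this
    exact (hU₁ U).trans this

namespace SignedWord

variable {w w' : SignedWord} {U : Finset ℕ}

lemma fst_mem_letters {p : Letter} (hp : p ∈ w.1) : p.1 ∈ w.letters :=
  mem_lettersL.mpr ⟨p, hp, rfl⟩

lemma letters_restrict (hU : U ⊆ w.letters) : (w.restrict U).letters = U :=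
  (lettersL_filter_mem U w.1).trans (inter_eq_right.mpr hU)

lemma numLetters_restrict (hU : U ⊆ w.letters) : (w.restrict U).numLetters = U.card := by
  rw [numLetters, letters_restrict hU]

lemma restrict_letters (w : SignedWord) : w.restrict w.letters = w :=
  Subtype.ext <| List.filter_eq_self.mpr fun p hp => by
    simpa using fst_mem_letters hp

lemma delete_eq_restrict_sdiff (w : SignedWord) (T : Finset ℕ) :
    w.delete T = w.restrict (w.letters \ T) :=
  Subtype.ext <| List.filter_congr fun p hp => by
    simp [fst_mem_letters hp]

lemma restrict_restrict (w : SignedWord) (U V : Finset ℕ) :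
    (w.restrict U).restrict V = w.restrict (U ∩ V) :=
  Subtype.ext <| by simp [restrict, List.filter_filter, Bool.and_comm]

lemma CyclicEquiv.refl (w : SignedWord) : w.CyclicEquiv w := CyclicEquivL.refl w.1

lemma CyclicEquiv.symm (h : w.CyclicEquiv w') : w'.CyclicEquiv w := CyclicEquivL.symm h

lemma CyclicEquiv.trans {w'' : SignedWord} (h : w.CyclicEquiv w') (h' : w'.CyclicEquiv w'') :
    w.CyclicEquiv w'' :=
  CyclicEquivL.trans h h'

lemma CyclicEquiv.exists_relabel_restrict (h : w.CyclicEquiv w') :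
    ∃ σ : ℕ ≃ ℕ, w'.letters = w.letters.image σ ∧
      ∀ U : Finset ℕ, (w.restrict U).CyclicEquiv (w'.restrict (U.image σ)) :=
  CyclicEquivL.exists_relabel_restrict h

lemma CyclicEquiv.numLetters_eq (h : w.CyclicEquiv w') : w.numLetters = w'.numLetters := by
  obtain ⟨σ, hL, -⟩ := h.exists_relabel_restrict
  rw [numLetters, numLetters, hL, card_image_of_injective _ σ.injective]

end SignedWord

section Alternating

variable {α R : Type*} [DecidableEq α] [CommRing R]

lemma sum_powerset_neg_one_pow_card_eq_ite (M : Finset α) :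
    ∑ T ∈ M.powerset, (-1 : R) ^ T.card = if M = ∅ then 1 else 0 := by
  have := congrArg (Int.cast : ℤ → R) (sum_powerset_neg_one_pow_card (x := M))
  push_cast at this
  simpa [apply_ite (Int.cast : ℤ → R)] using this

lemma sum_powerset_neg_one_pow_card_mul_sum_powerset_sdiff (S L : Finset α) (g : Finset α → R) :
    ∑ T ∈ S.powerset, (-1 : R) ^ T.card * ∑ U ∈ (L \ T).powerset, g U =
      ∑ U ∈ L.powerset with S ⊆ U, g U := by
  calc _ = ∑ T ∈ S.powerset, ∑ U ∈ L.powerset,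
        if Disjoint U T then (-1 : R) ^ T.card * g U else 0 := by
        refine sum_congr rfl fun T _ => ?_
        rw [mul_sum, ← sum_filter]
        exact sum_congr (by ext; simp [subset_sdiff]) fun _ _ => rfl
    _ = ∑ U ∈ L.powerset, (∑ T ∈ (S \ U).powerset, (-1 : R) ^ T.card) * g U := by
        rw [sum_comm]
        refine sum_congr rfl fun U _ => ?_
        rw [sum_mul, ← sum_filter]
        exact sum_congr (by ext; simp [subset_sdiff, disjoint_comm]) fun _ _ => rfl
    _ = _ := by
        rw [sum_filter]
        simp [sum_powerset_neg_one_pow_card_eq_ite, sdiff_eq_empty_iff_subset]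

end Alternating

section FiniteType

variable {F : Type*} [Field F]

lemma FiniteTypeLe.mono {m n : ℕ} {v : SignedWord → F} (hv : FiniteTypeLe F m v) (hmn : m ≤ n) :
    FiniteTypeLe F n v :=
  ⟨hv.1, fun w S hS hn => hv.2 w S hS (hmn.trans_lt hn)⟩

def subwordSum (φ : SignedWord → F) (w : SignedWord) : F :=
  ∑ U ∈ w.letters.powerset, φ (w.restrict U)

lemma wordInvariant_subwordSum {φ : SignedWord → F} (hφ : WordInvariant F φ) :
    WordInvariant F (subwordSum φ) := by
  intro w w' h
  obtain ⟨σ, hL, hU⟩ := h.exists_relabel_restrict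
  refine sum_nbij' (fun U => U.image σ) (fun V => V.image σ.symm) ?_ ?_ ?_ ?_
    fun U _ => hφ _ _ (hU U)
  · intro U hU; simpa [hL] using image_subset_image (f := σ) (mem_powerset.mp hU)
  · intro V hV; simpa [hL, image_image] using image_subset_image (f := σ.symm) (mem_powerset.mp hV)
  · intro U _; simp [image_image]
  · intro V _; simp [image_image]

lemma prolong_subwordSum (φ : SignedWord → F) (w : SignedWord) (S : Finset ℕ) :
    prolong F (subwordSum φ) w S = ∑ U ∈ w.letters.powerset with S ⊆ U, φ (w.restrict U) := by
  rw [← sum_powerset_neg_one_pow_card_mul_sum_powerset_sdiff]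
  refine sum_congr rfl fun T _ => ?_
  rw [subwordSum, w.delete_eq_restrict_sdiff, w.letters_restrict sdiff_subset]
  congr 1
  refine sum_congr rfl fun U hU => ?_
  rw [w.restrict_restrict, inter_eq_right.mpr (mem_powerset.mp hU)]

lemma finiteTypeLe_subwordSum {φ : SignedWord → F} {n : ℕ} (hφ : WordInvariant F φ)
    (hφn : ∀ x : SignedWord, n < x.numLetters → φ x = 0) :
    FiniteTypeLe F n (subwordSum φ) := by
  refine ⟨wordInvariant_subwordSum hφ, fun w S _ hS => ?_⟩
  rw [prolong_subwordSum]
  refine sum_eq_zero fun U hU => hφn _ ?_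
  obtain ⟨hUw, hSU⟩ := mem_filter.mp hU
  rw [w.numLetters_restrict (mem_powerset.mp hUw)]
  exact hS.trans_le (card_le_card hSU)

end FiniteType

section Ncount

variable {F : Type*} [Field F]

open Classical in
lemma natCast_ncount (u w : SignedWord) :
    (Ncount u w : F) = subwordSum (fun x => if x.CyclicEquiv u then 1 else 0) w := by
  rw [Ncount, natCast_card_filter, subwordSum]
  refine sum_congr rfl fun U hU => if_congr ⟨And.right, fun h => ⟨?_, h⟩⟩ rfl rfl
  rw [← w.numLetters_restrict (mem_powerset.mp hU), h.numLetters_eq]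

lemma finiteTypeLe_ncount (u : SignedWord) :
    FiniteTypeLe F u.numLetters fun w => (Ncount u w : F) := by
  classical
  rw [funext (natCast_ncount u)]
  refine finiteTypeLe_subwordSum (fun x y hxy => ?_) fun x hx => if_neg fun h => ?_
  · exact if_congr ⟨hxy.symm.trans, hxy.trans⟩ rfl rfl
  · exact hx.ne' h.numLetters_eq

end Ncount

open Classical in
/-- Only `U = letters w` is large enough to be counted. -/
lemma ncount_of_numLetters_le {u w : SignedWord} (hw : w.numLetters ≤ u.numLetters) :
    Ncount u w = if w.CyclicEquiv u then 1 else 0 := by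
  have key : ∀ U ∈ w.letters.powerset,
      U.card = u.numLetters ∧ (w.restrict U).CyclicEquiv u ↔ U = w.letters ∧ w.CyclicEquiv u := by
    intro U hU
    constructor
    · rintro ⟨hcard, h⟩
      have hUw : U = w.letters := eq_of_subset_of_card_le (mem_powerset.mp hU) (hcard ▸ hw)
      exact ⟨hUw, by rwa [hUw, w.restrict_letters] at h⟩
    · rintro ⟨rfl, h⟩
      exact ⟨h.numLetters_eq, by rwa [w.restrict_letters]⟩
  rw [Ncount, filter_congr key]
  split_ifs with h <;> simp [h, filter_eq']

/-- finite type invariants of degree ≤ `n` separate cyclic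
equivalence classes of signed words with at most `n` letters. -/
theorem finiteType_separates (F : Type*) [Field F] (n : ℕ) (w₁ w₂ : SignedWord)
    (h₁ : w₁.numLetters ≤ n) (h₂ : w₂.numLetters ≤ n)
    (h : ∀ v : SignedWord → F, FiniteTypeLe F n v → v w₁ = v w₂) :
    w₁.CyclicEquiv w₂ := by
  wlog hle : w₂.numLetters ≤ w₁.numLetters generalizing w₁ w₂
  · exact (this w₂ w₁ h₂ h₁ (fun v hv => (h v hv).symm) (le_of_not_ge hle)).symm
  have hv := h _ ((finiteTypeLe_ncount w₁).mono h₁)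
  rw [ncount_of_numLetters_le le_rfl, ncount_of_numLetters_le hle,
    if_pos (SignedWord.CyclicEquiv.refl w₁)] at hv
  by_contra hne
  rw [if_neg fun h₂₁ => hne h₂₁.symm] at hv
  exact one_ne_zero (by exact_mod_cast hv)
end

section
/- V₀ consists exactly of the constant functions: a cyclic equivalence invariant v : W → F is a finite type invariant of degree ≤ 0 if and only if v is constant. In particular dim_F V₀ = 1. -/
/-!
With one singular letter `a` the prolongation is `v w - v (w \ a)`, so degree `≤ 0` means that
deleting a letter never changes `v`; deleting all letters gives `v w = v φ`. Conversely, for a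
constant `v` the prolongation is `c` times the alternating sum `∑_{T ⊆ S} (-1)^|T|`, which vanishes
for `S ≠ ∅`. Hence `V₀` is the line spanned by the constant `1`.
-/

namespace SignedWord

theorem delete_empty (w : SignedWord) : w.delete ∅ = w :=
  Subtype.ext (by simp [delete])

theorem delete_delete (w : SignedWord) (T U : Finset ℕ) :
    (w.delete T).delete U = w.delete (T ∪ U) := by
  apply Subtype.ext
  simp [delete, List.filter_filter, not_or, Bool.and_comm]

theorem letters_delete (w : SignedWord) (T : Finset ℕ) :
    (w.delete T).letters = w.letters \ T := by
  ext a
  simp [letters, lettersL, delete]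

theorem delete_letters (w : SignedWord) : w.delete w.letters = wordEmpty := by
  refine Subtype.ext (List.filter_eq_nil_iff.mpr fun p hp => ?_)
  have : p.1 ∈ w.letters := List.mem_toFinset.mpr (List.mem_map_of_mem hp)
  simpa using this

theorem apply_eq_apply_wordEmpty {α : Type*} (f : SignedWord → α)
    (h : ∀ w a, a ∈ w.letters → f (w.delete {a}) = f w) (w : SignedWord) :
    f w = f wordEmpty := by
  suffices ∀ T ⊆ w.letters, f (w.delete T) = f w by
    rw [← delete_letters, this _ subset_rfl]
  intro T
  induction T using Finset.induction_on with
  | empty => simp [delete_empty]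
  | insert a T haT ih =>
    intro hT
    have ha : a ∈ (w.delete T).letters := by
      rw [letters_delete]
      exact Finset.mem_sdiff.mpr ⟨hT (Finset.mem_insert_self a T), haT⟩
    rw [Finset.insert_eq, Finset.union_comm, ← delete_delete, h _ a ha,
      ih ((Finset.subset_insert a T).trans hT)]

end SignedWord

open SignedWord

theorem prolong_singleton (F : Type*) [Field F] (v : SignedWord → F) (w : SignedWord) (a : ℕ) :
    prolong F v w {a} = v w - v (w.delete {a}) := by
  rw [prolong, ← Finset.insert_empty (a := a), Finset.sum_powerset_insert (Finset.notMem_empty a)]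
  simp [delete_empty, sub_eq_add_neg]

theorem prolong_const (F : Type*) [Field F] (c : F) (w : SignedWord) {S : Finset ℕ}
    (hS : S.Nonempty) : prolong F (fun _ => c) w S = 0 := by
  have alternating : ∑ T ∈ S.powerset, (-1 : F) ^ T.card = 0 := by
    have := congrArg (Int.cast : ℤ → F) (Finset.sum_powerset_neg_one_pow_card_of_nonempty hS)
    push_cast at this
    exact this
  rw [prolong, ← Finset.sum_mul, alternating, zero_mul]

theorem finiteTypeLe_zero_iff (F : Type*) [Field F] (v : SignedWord → F) :
    FiniteTypeLe F 0 v ↔ ∃ c : F, ∀ w, v w = c := by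
  constructor
  · rintro ⟨-, hv⟩
    refine ⟨v wordEmpty, apply_eq_apply_wordEmpty v fun w a ha => ?_⟩
    have hprolong := hv w {a} (Finset.singleton_subset_iff.mpr ha) Nat.one_pos
    rw [prolong_singleton, sub_eq_zero] at hprolong
    exact hprolong.symm
  · rintro ⟨c, hc⟩
    obtain rfl : v = fun _ => c := funext hc
    exact ⟨fun _ _ _ => rfl, fun w S _ hS => prolong_const F c w (Finset.card_pos.mp hS)⟩

theorem Vn_zero_eq_span_one (F : Type*) [Field F] : Vn F 0 = F ∙ (1 : SignedWord → F) := by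
  ext v
  rw [Submodule.mem_span_singleton]
  change FiniteTypeLe F 0 v ↔ _
  rw [finiteTypeLe_zero_iff]
  simp [funext_iff, eq_comm]

/-- `V₀` consists exactly of the constant functions, and
`dim V₀ = 1`. -/
theorem V0_eq_constants (F : Type*) [Field F] :
    (∀ v : SignedWord → F, WordInvariant F v →
      (FiniteTypeLe F 0 v ↔ ∃ c : F, ∀ w : SignedWord, v w = c)) ∧
    Module.finrank F (Vn F 0) = 1 := by
  refine ⟨fun v _ => finiteTypeLe_zero_iff F v, ?_⟩
  rw [Vn_zero_eq_span_one]
  exact finrank_span_singleton (Function.ne_iff.mpr ⟨wordEmpty, one_ne_zero⟩)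
end

section
/- A finite type invariant of degree ≤ n is determined by its values on signed words with at most n letters: if v₁ and v₂ are finite type invariants of degree ≤ n that agree on every signed word with at most n letters, then v₁ = v₂. Consequently V_n is finite-dimensional, of dimension at most the number of cyclic equivalence classes of signed words with at most n letters. -/
/-!
For `w` with more than `n` letters, the vanishing prolongation `prolong F v w w.letters` is an
alternating sum of the values of `v` on the words `w.delete T`, and `v w` is its only term with
as many letters as `w`. So by induction on the number of letters, an invariant of degree `≤ n`
vanishing on words with at most `n` letters vanishes. Hence restriction to the classes of such
words is injective on `Vn F n`; there are finitely many such classes, since relabelling moves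
the letters of a word with at most `n` letters into `{0, …, n - 1}`.
-/

theorem List.finite_setOf_forall_mem_and_count_le {α : Type*} [DecidableEq α] (s : Finset α)
    (k : ℕ) : {l : List α | ∀ x ∈ l, x ∈ s ∧ l.count x ≤ k}.Finite := by
  refine ((List.finite_length_le s (k * s.card)).image (List.map Subtype.val)).subset ?_
  intro l hl
  have hlen : l.length ≤ k * s.card := calc
    l.length = ∑ x ∈ l.toFinset, l.count x := (List.sum_toFinset_count_eq_length l).symm
    _ ≤ ∑ _x ∈ l.toFinset, k := Finset.sum_le_sum fun x hx => (hl x (List.mem_toFinset.mp hx)).2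
    _ = k * l.toFinset.card := by rw [Finset.sum_const, smul_eq_mul, mul_comm]
    _ ≤ k * s.card := by
      gcongr
      exact fun x hx => (hl x (List.mem_toFinset.mp hx)).1
  lift l to List s using fun x hx => (hl x hx).1
  exact ⟨l, by simpa using hlen, rfl⟩

theorem isSignedWord_map {w : List Letter} (hw : IsSignedWord w) {g : ℕ → ℕ}
    (hg : Function.Injective g) : IsSignedWord (w.map fun p => (g p.1, p.2)) := by
  have hinj : Function.Injective fun p : Letter => ((g p.1, p.2) : Letter) :=
    fun p q h => Prod.ext (hg (Prod.ext_iff.mp h).1) (Prod.ext_iff.mp h).2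
  simp only [IsSignedWord, List.mem_map, forall_exists_index, and_imp, forall_apply_eq_imp_iff₂]
  intro p hp
  refine ⟨?_, fun q hq h => ((hw q hq).2 p hp (hg h.symm)).symm⟩
  rw [List.count_map_of_injective _ _ hinj]
  exact (hw p hp).1

def SignedWord.relabel (w : SignedWord) (f : ℕ ≃ ℕ) : SignedWord :=
  ⟨w.1.map fun p => (f p.1, p.2), isSignedWord_map w.2 f.injective⟩

theorem SignedWord.cyclicEquiv_relabel (w : SignedWord) (f : ℕ ≃ ℕ) :
    w.CyclicEquiv (w.relabel f) :=
  Relation.EqvGen.rel _ _ (Or.inl ⟨f, rfl⟩)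

theorem SignedWord.exists_cyclicEquiv_letters_lt (w : SignedWord) :
    ∃ w' : SignedWord, w.CyclicEquiv w' ∧ ∀ p ∈ w'.1, p.1 < w.numLetters := by
  obtain ⟨f, hf⟩ := Equiv.Perm.exists_map_finset_eq w.letters (Finset.range w.numLetters)
    (Finset.card_range _).symm
  refine ⟨w.relabel f, w.cyclicEquiv_relabel f, ?_⟩
  simp only [SignedWord.relabel, List.mem_map, forall_exists_index, and_imp]
  rintro _ p hp rfl
  have hpw : p.1 ∈ w.letters := List.mem_toFinset.mpr (List.mem_map_of_mem hp)
  have hfp := Finset.mem_map_of_mem f.toEmbedding hpw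
  rwa [hf, Finset.mem_range] at hfp

abbrev SmallClass (n : ℕ) : Type :=
  {c : Quotient cycSetoid // ∃ w : SignedWord, w.numLetters ≤ n ∧ Quotient.mk cycSetoid w = c}

instance SmallClass.finite (n : ℕ) : Finite (SmallClass n) := by
  classical
  have hwords := ((List.finite_setOf_forall_mem_and_count_le
    (Finset.range n ×ˢ Finset.univ : Finset Letter) 2).preimage
    Subtype.val_injective.injOn).image (Quotient.mk cycSetoid)
  refine Set.Finite.to_subtype (hwords.subset ?_)
  rintro _ ⟨w, hw, rfl⟩
  obtain ⟨w', hww', hsmall⟩ := w.exists_cyclicEquiv_letters_lt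
  refine ⟨w', fun p hp => ⟨?_, ?_⟩, Quotient.sound (Relation.EqvGen.symm _ _ hww')⟩
  · simpa using (hsmall p hp).trans_le hw
  -- `IsSignedWord` counts with the componentwise `BEq` instance on `ℕ × Bool`.
  · rw [lawful_beq_subsingleton instBEqOfDecidableEq instBEqProd]
    exact (w'.2 p hp).1.le

theorem SignedWord.delete_empty_s15 (w : SignedWord) : w.delete ∅ = w :=
  Subtype.ext (by simp [SignedWord.delete])

theorem SignedWord.letters_delete_s15 (w : SignedWord) (T : Finset ℕ) :
    (w.delete T).letters = w.letters \ T := by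
  ext a
  simp only [SignedWord.delete, SignedWord.letters, lettersL, List.mem_toFinset, List.mem_map,
    List.mem_filter, Finset.mem_sdiff, decide_eq_true_eq]
  constructor
  · rintro ⟨p, ⟨hp, haT⟩, rfl⟩
    exact ⟨⟨p, hp, rfl⟩, haT⟩
  · rintro ⟨⟨p, hp, rfl⟩, haT⟩
    exact ⟨p, ⟨hp, haT⟩, rfl⟩

theorem SignedWord.numLetters_delete_lt (w : SignedWord) {T : Finset ℕ} (hT : T ⊆ w.letters)
    (hne : T.Nonempty) : (w.delete T).numLetters < w.numLetters := by
  rw [SignedWord.numLetters, letters_delete_s15]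
  exact Finset.card_lt_card (Finset.sdiff_ssubset hT hne)

theorem prolong_eq_self_of_forall_delete_eq_zero {F : Type*} [Field F] {v : SignedWord → F}
    {w : SignedWord} {S : Finset ℕ}
    (h : ∀ T ⊆ S, T.Nonempty → v (w.delete T) = 0) : prolong F v w S = v w := by
  rw [prolong, ← Finset.add_sum_erase _ _ (Finset.empty_mem_powerset S),
    Finset.card_empty, pow_zero, one_mul, w.delete_empty_s15, add_eq_left]
  refine Finset.sum_eq_zero fun T hT => ?_
  rw [Finset.mem_erase, Finset.mem_powerset, ← Finset.nonempty_iff_ne_empty] at hT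
  rw [h T hT.2 hT.1, mul_zero]

theorem FiniteTypeLe.eq_zero {F : Type*} [Field F] {n : ℕ} {v : SignedWord → F}
    (hv : FiniteTypeLe F n v) (hsmall : ∀ w : SignedWord, w.numLetters ≤ n → v w = 0) :
    v = 0 := by
  funext w
  induction hk : w.numLetters using Nat.strong_induction_on generalizing w with
  | _ k ih =>
    rcases le_or_gt k n with hkn | hnk
    · exact hsmall w (hk ▸ hkn)
    · have hprolong : prolong F v w w.letters = v w :=
        prolong_eq_self_of_forall_delete_eq_zero fun T hT hne =>
          ih _ (hk ▸ w.numLetters_delete_lt hT hne) _ rfl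
      rw [Pi.zero_apply, ← hprolong]
      exact hv.2 w w.letters subset_rfl (hk ▸ hnk : n < w.numLetters)

theorem FiniteTypeLe.eq_of_forall_numLetters_le {F : Type*} [Field F] {n : ℕ}
    {v₁ v₂ : SignedWord → F} (h₁ : FiniteTypeLe F n v₁) (h₂ : FiniteTypeLe F n v₂)
    (h : ∀ w : SignedWord, w.numLetters ≤ n → v₁ w = v₂ w) : v₁ = v₂ :=
  sub_eq_zero.mp <| FiniteTypeLe.eq_zero ((Vn F n).sub_mem h₁ h₂) fun w hw =>
    sub_eq_zero.mpr (h w hw)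

def restrictSmallClass (F : Type*) [Field F] (n : ℕ) : Vn F n →ₗ[F] (SmallClass n → F) where
  toFun v c := Quotient.lift v.1 (fun w w' h => v.2.1 w w' h) c.1
  map_add' v₁ v₂ := by
    funext ⟨c, _⟩
    induction c using Quotient.inductionOn
    rfl
  map_smul' a v := by
    funext ⟨c, _⟩
    induction c using Quotient.inductionOn
    rfl

theorem restrictSmallClass_injective (F : Type*) [Field F] (n : ℕ) :
    Function.Injective (restrictSmallClass F n) := by
  refine (injective_iff_map_eq_zero _).mpr fun v hv => Subtype.ext ?_
  exact FiniteTypeLe.eq_zero v.2 fun w hw => congrFun hv ⟨Quotient.mk cycSetoid w, w, hw, rfl⟩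

/-- a finite type invariant of degree ≤ `n` is determined by its
values on signed words with at most `n` letters; consequently `Vₙ` is
finite-dimensional, of dimension at most the number of cyclic equivalence
classes of signed words with at most `n` letters. -/
theorem finiteTypeLe_determined_by_small_words (F : Type*) [Field F] (n : ℕ) :
    (∀ v₁ v₂ : SignedWord → F, FiniteTypeLe F n v₁ → FiniteTypeLe F n v₂ →
      (∀ w : SignedWord, w.numLetters ≤ n → v₁ w = v₂ w) → v₁ = v₂) ∧
    FiniteDimensional F (Vn F n) ∧
    Module.finrank F (Vn F n) ≤
      Nat.card {c : Quotient cycSetoid //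
        ∃ w : SignedWord, w.numLetters ≤ n ∧ Quotient.mk cycSetoid w = c} := by
  have := Fintype.ofFinite (SmallClass n)
  have hinj := restrictSmallClass_injective F n
  have : FiniteDimensional F (Vn F n) := .of_injective _ hinj
  refine ⟨fun _ _ => FiniteTypeLe.eq_of_forall_numLetters_le, this, ?_⟩
  calc Module.finrank F (Vn F n) ≤ Module.finrank F (SmallClass n → F) :=
        LinearMap.finrank_le_finrank_of_injective hinj
    _ = Nat.card (SmallClass n) := by
        rw [Module.finrank_fintype_fun_eq_card, Nat.card_eq_fintype_card]
end
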